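/- arXiv:2102.01474 — 2 statements merged into one kernel-verified Lean document; each statement's English description precedes it below -/
import Mathlib

section
/- Let Φ : ℂⁿ → ℝ be a strictly plurisubharmonic quadratic form, let Ψ be the polarization of Φ, and assume (the fundamental estimate) that there exist C₀, c₀ > 0 with −C₀|z−w|² ≤ 2 Re Ψ(z, w̄) − Φ(z) − Φ(w) ≤ −c₀|z−w|² for all z, w ∈ ℂⁿ. Then for every s ∈ ℝ and every constant Ĉ ∈ ℂ, the operator Π u(z) = Ĉ ∫_{ℂⁿ} e^{2Ψ(z,w̄)} u(w) e^{-2Φ(w)} dL(w) is a bounded linear operator from L²_{Φ,s}(ℂⁿ) to L²_{Φ,s}(ℂⁿ), i.e., there exists M > 0 with ∫_{ℂⁿ} |Π u(z)|² ⟨z⟩^{2s} e^{-2Φ(z)} dL(z) ≤ M² ∫_{ℂⁿ} |u(w)|² ⟨w⟩^{2s} e^{-2Φ(w)} dL(w) for all u ∈ L²_{Φ,s}(ℂⁿ). -/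
open Matrix MeasureTheory ENNReal

noncomputable section

/-- The squared Euclidean norm `|z|²` on `ℂⁿ`. -/
def eSq {n : ℕ} (z : Fin n → ℂ) : ℝ := ∑ i, Complex.normSq (z i)

/-- The Japanese bracket `⟨z⟩ = (1 + |z|²)^{1/2}`. -/
def jb {n : ℕ} (z : Fin n → ℂ) : ℝ := Real.sqrt (1 + eSq z)

/-- `Φ : ℂⁿ → ℝ` is a (real) quadratic form of the underlying real coordinates. -/
def IsRQuad {n : ℕ} (Φ : (Fin n → ℂ) → ℝ) : Prop :=
  ∃ B : (Fin n → ℂ) →ₗ[ℝ] (Fin n → ℂ) →ₗ[ℝ] ℝ, ∀ z, Φ z = B z z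

/-- `Φ : ℂⁿ → ℝ` is a strictly plurisubharmonic quadratic form.  For a quadratic form `Φ`,
the Levi form satisfies `(∂²_{z z̄}Φ) w ⋅ w̄ = (Φ(w) + Φ(i w))/2`, so positive definiteness of
the Levi matrix is equivalent to `Φ(w) + Φ(i·w) > 0` for all `w ≠ 0`. -/
def IsSPSH {n : ℕ} (Φ : (Fin n → ℂ) → ℝ) : Prop :=
  IsRQuad Φ ∧ ∀ z : Fin n → ℂ, z ≠ 0 → 0 < Φ z + Φ (Complex.I • z)

/-- The squared weighted norm `‖u‖_s² = ∫ |u(z)|² ⟨z⟩^{2s} e^{-2Φ(z)} L(dz)` (in `ℝ≥0∞`). -/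
def hnorm {n : ℕ} (Φ : (Fin n → ℂ) → ℝ) (s : ℝ) (u : (Fin n → ℂ) → ℂ) : ℝ≥0∞ :=
  ∫⁻ z : Fin n → ℂ, (‖u z‖₊ : ℝ≥0∞) ^ 2 * ENNReal.ofReal (jb z ^ (2 * s) * Real.exp (-2 * Φ z))

/-- A conic subset of `ℂⁿ`. -/
def IsConic {n : ℕ} (V : Set (Fin n → ℂ)) : Prop := ∀ z ∈ V, ∀ t : ℝ, 0 < t → t • z ∈ V

/-- The `1/2`-Gelfand–Shilov wavefront set of `u` relative to `Φ`: the complement in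
`ℂⁿ∖{0}` of the points having an open conic neighborhood in `ℂⁿ∖{0}` on which
`|u(z)| ≤ C e^{Φ(z) - c|z|²}`. -/
def wf {n : ℕ} (Φ : (Fin n → ℂ) → ℝ) (u : (Fin n → ℂ) → ℂ) : Set (Fin n → ℂ) :=
  {z₀ | z₀ ≠ 0 ∧ ¬ ∃ V : Set (Fin n → ℂ), IsOpen V ∧ IsConic V ∧ (0 : Fin n → ℂ) ∉ V ∧ z₀ ∈ V ∧
      ∃ C c : ℝ, 0 < C ∧ 0 < c ∧ ∀ z ∈ V, ‖u z‖ ≤ C * Real.exp (Φ z - c * eSq z)}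

/-- A holomorphic quadratic form on `ℂ^{2n} = ℂⁿ_z × ℂⁿ_θ`. -/
def IsCQuad2 {n : ℕ} (Ψ : (Fin n → ℂ) → (Fin n → ℂ) → ℂ) : Prop :=
  ∃ B : ((Fin n → ℂ) × (Fin n → ℂ)) →ₗ[ℂ] ((Fin n → ℂ) × (Fin n → ℂ)) →ₗ[ℂ] ℂ,
    ∀ z θ, Ψ z θ = B (z, θ) (z, θ)

/-- A real quadratic form on `ℂⁿ × ℂⁿ` viewed as a real vector space. -/
def IsRQuadPair {n : ℕ} (R : (Fin n → ℂ) → (Fin n → ℂ) → ℝ) : Prop :=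
  ∃ B : ((Fin n → ℂ) × (Fin n → ℂ)) →ₗ[ℝ] ((Fin n → ℂ) × (Fin n → ℂ)) →ₗ[ℝ] ℝ,
    ∀ z w, R z w = B (z, w) (z, w)

/-- The Bergman-form integral operator
`G u (z) = a ∫ e^{2Ψ(z, w̄)} u(w) e^{-2Φ(w)} L(dw)`. -/
def berg {n : ℕ} (a : ℂ) (Ψ : (Fin n → ℂ) → (Fin n → ℂ) → ℂ) (Φ : (Fin n → ℂ) → ℝ)
    (u : (Fin n → ℂ) → ℂ) (z : Fin n → ℂ) : ℂ :=
  a * ∫ w : Fin n → ℂ, Complex.exp (2 * Ψ z (star w)) * u w * (Real.exp (-2 * Φ w) : ℂ)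

/-!
The operator is dominated by a convolution: the upper half of the fundamental estimate gives
`|e^{2Ψ(z,w̄)}| e^{-Φ(z)-Φ(w)} ≤ e^{-c₀|z-w|²}`, and Peetre's inequality
`⟨z⟩^s ≤ 2^{|s|/2} ⟨z-w⟩^{|s|} ⟨w⟩^s` moves the polynomial weight across. Conjugating by the
weight `e^{-Φ} ⟨·⟩^s`, which is an isometry from `L²_{Φ,s}` onto `L²`, the operator is therefore
bounded pointwise by convolution with the integrable kernel `⟨x⟩^{|s|} e^{-c₀|x|²}`, which is
bounded on `L²` by Young's inequality.
-/

variable {n : ℕ}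

lemma eSq_nonneg (z : Fin n → ℂ) : 0 ≤ eSq z :=
  Finset.sum_nonneg fun _ _ => Complex.normSq_nonneg _

lemma continuous_eSq : Continuous (eSq (n := n)) :=
  continuous_finsetSum _ fun i _ => Complex.continuous_normSq.comp (continuous_apply i)

lemma eSq_add_le (x y : Fin n → ℂ) : eSq (x + y) ≤ 2 * eSq x + 2 * eSq y := by
  simp only [eSq, Finset.mul_sum, ← Finset.sum_add_distrib, Pi.add_apply,
    Complex.normSq_eq_norm_sq]
  refine Finset.sum_le_sum fun i _ => ?_
  nlinarith [norm_add_le (x i) (y i), norm_nonneg (x i + y i), sq_nonneg (‖x i‖ - ‖y i‖)]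

lemma jb_pos (z : Fin n → ℂ) : 0 < jb z :=
  Real.sqrt_pos.2 (by linarith [eSq_nonneg z])

lemma continuous_jb : Continuous (jb (n := n)) :=
  Real.continuous_sqrt.comp (continuous_const.add continuous_eSq)

lemma jb_sub_comm (z w : Fin n → ℂ) : jb (w - z) = jb (z - w) := by
  simp only [jb, eSq, ← neg_sub z w, Pi.neg_apply, Complex.normSq_neg]

lemma jb_rpow_eq (z : Fin n → ℂ) (a : ℝ) : jb z ^ a = (1 + eSq z) ^ (a / 2) := by
  rw [jb, Real.sqrt_eq_rpow, ← Real.rpow_mul (by linarith [eSq_nonneg z]), one_div_mul_eq_div]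

lemma jb_le_sqrt_two_mul (z w : Fin n → ℂ) : jb z ≤ Real.sqrt 2 * jb (z - w) * jb w := by
  have h := eSq_add_le (z - w) w
  rw [sub_add_cancel] at h
  rw [jb, jb, jb, ← Real.sqrt_mul zero_le_two, ← Real.sqrt_mul (by linarith [eSq_nonneg (z - w)])]
  exact Real.sqrt_le_sqrt (by nlinarith [eSq_nonneg w, eSq_nonneg (z - w)])

lemma jb_rpow_le_of_nonneg {t : ℝ} (ht : 0 ≤ t) (z w : Fin n → ℂ) :
    jb z ^ t ≤ 2 ^ (t / 2) * jb (z - w) ^ t * jb w ^ t := by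
  have hsqrt : Real.sqrt 2 ^ t = 2 ^ (t / 2) := by
    rw [Real.sqrt_eq_rpow, ← Real.rpow_mul zero_le_two, one_div_mul_eq_div]
  calc jb z ^ t ≤ (Real.sqrt 2 * jb (z - w) * jb w) ^ t :=
        Real.rpow_le_rpow (jb_pos z).le (jb_le_sqrt_two_mul z w) ht
    _ = 2 ^ (t / 2) * jb (z - w) ^ t * jb w ^ t := by
        rw [Real.mul_rpow (mul_nonneg (Real.sqrt_nonneg 2) (jb_pos _).le) (jb_pos w).le,
          Real.mul_rpow (Real.sqrt_nonneg 2) (jb_pos _).le, hsqrt]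

lemma jb_rpow_le (s : ℝ) (z w : Fin n → ℂ) :
    jb z ^ s ≤ 2 ^ (|s| / 2) * jb (z - w) ^ |s| * jb w ^ s := by
  rcases le_or_gt 0 s with hs | hs
  · rw [abs_of_nonneg hs]
    exact jb_rpow_le_of_nonneg hs z w
  · obtain ⟨t, ht, rfl⟩ : ∃ t, 0 < t ∧ s = -t := ⟨-s, by linarith, by ring⟩
    have h := jb_rpow_le_of_nonneg ht.le w z
    rw [jb_sub_comm] at h
    have hz := Real.rpow_pos_of_pos (jb_pos z) t
    have hw := Real.rpow_pos_of_pos (jb_pos w) t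
    rw [abs_neg, abs_of_pos ht, Real.rpow_neg (jb_pos z).le, Real.rpow_neg (jb_pos w).le]
    field_simp
    linarith

lemma one_add_rpow_le_mul_exp (a : ℝ) {b : ℝ} (hb : 0 < b) :
    ∃ K : ℝ, ∀ t : ℝ, 0 ≤ t → (1 + t) ^ a ≤ K * Real.exp (b * t) := by
  set N := ⌈a⌉₊
  refine ⟨N.factorial * Real.exp b / b ^ N, fun t ht => ?_⟩
  have hexp := Real.pow_div_factorial_le_exp (x := b * (1 + t)) (by positivity) N
  calc (1 + t) ^ a ≤ (1 + t) ^ (N : ℝ) :=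
        Real.rpow_le_rpow_of_exponent_le (by linarith) (Nat.le_ceil a)
    _ = (b * (1 + t)) ^ N / N.factorial * (N.factorial / b ^ N) := by
        rw [Real.rpow_natCast, mul_pow]
        field_simp
    _ ≤ Real.exp (b * (1 + t)) * (N.factorial / b ^ N) :=
        mul_le_mul_of_nonneg_right hexp (by positivity)
    _ = N.factorial * Real.exp b / b ^ N * Real.exp (b * t) := by
        rw [mul_one_add, Real.exp_add]
        ring

lemma integrable_exp_neg_mul_normSq {b : ℝ} (hb : 0 < b) :
    Integrable fun z : ℂ => Real.exp (-b * Complex.normSq z) := by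
  refine (GaussianFourier.integrable_cexp_neg_mul_sq_norm_add (V := ℂ) (b := b)
    (by simpa using hb) 0 0).norm.congr (ae_of_all _ fun z => ?_)
  simp [Complex.norm_exp, Complex.normSq_eq_norm_sq, ← Complex.ofReal_pow]

lemma integrable_exp_neg_mul_eSq {b : ℝ} (hb : 0 < b) :
    Integrable fun x : Fin n → ℂ => Real.exp (-b * eSq x) := by
  simp only [eSq, Finset.mul_sum, Real.exp_sum]
  exact Integrable.fintype_prod fun _ => integrable_exp_neg_mul_normSq hb

def schurKernel (c s : ℝ) (x : Fin n → ℂ) : ℝ :=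
  2 ^ (|s| / 2) * jb x ^ |s| * Real.exp (-c * eSq x)

lemma schurKernel_nonneg (c s : ℝ) (x : Fin n → ℂ) : 0 ≤ schurKernel c s x := by
  have := jb_pos x
  unfold schurKernel
  positivity

lemma continuous_schurKernel (c s : ℝ) : Continuous (schurKernel (n := n) c s) :=
  (continuous_const.mul (continuous_jb.rpow_const fun x => Or.inl (jb_pos x).ne')).mul
    (Real.continuous_exp.comp (continuous_const.mul continuous_eSq))

lemma integrable_schurKernel {c : ℝ} (hc : 0 < c) (s : ℝ) :
    Integrable (schurKernel (n := n) c s) := by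
  obtain ⟨K, hK⟩ := one_add_rpow_le_mul_exp (|s| / 2) (half_pos hc)
  refine ((integrable_exp_neg_mul_eSq (half_pos hc)).const_mul (2 ^ (|s| / 2) * K)).mono'
    (continuous_schurKernel c s).aestronglyMeasurable (ae_of_all _ fun x => ?_)
  rw [Real.norm_of_nonneg (schurKernel_nonneg c s x), schurKernel, jb_rpow_eq]
  calc 2 ^ (|s| / 2) * (1 + eSq x) ^ (|s| / 2) * Real.exp (-c * eSq x)
      ≤ 2 ^ (|s| / 2) * (K * Real.exp (c / 2 * eSq x)) * Real.exp (-c * eSq x) := by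
        gcongr
        exact hK _ (eSq_nonneg x)
    _ = 2 ^ (|s| / 2) * K * Real.exp (-(c / 2) * eSq x) := by
        rw [mul_assoc, mul_assoc, ← Real.exp_add]
        ring_nf

theorem lintegral_mul_sq_le {α : Type*} [MeasurableSpace α] {μ : Measure α} {f g : α → ℝ≥0∞}
    (hf : AEMeasurable f μ) (hg : AEMeasurable g μ) :
    (∫⁻ a, f a * g a ∂μ) ^ 2 ≤ (∫⁻ a, f a ∂μ) * ∫⁻ a, f a * g a ^ 2 ∂μ := by
  have hsq_half : ∀ x : ℝ≥0∞, (x ^ (1 / 2 : ℝ)) ^ 2 = x := fun x => by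
    rw [← ENNReal.rpow_mul_natCast]
    norm_num
  have hsplit : ∀ a, f a * g a = f a ^ (1 / 2 : ℝ) * (f a * g a ^ 2) ^ (1 / 2 : ℝ) := fun a => by
    rw [ENNReal.mul_rpow_of_nonneg _ _ (by norm_num), ← mul_assoc,
      ← ENNReal.rpow_add_of_nonneg _ _ (by norm_num) (by norm_num), ← ENNReal.rpow_natCast,
      ← ENNReal.rpow_mul]
    norm_num
  calc (∫⁻ a, f a * g a ∂μ) ^ 2
      = (∫⁻ a, f a ^ (1 / 2 : ℝ) * (f a * g a ^ 2) ^ (1 / 2 : ℝ) ∂μ) ^ 2 := by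
        rw [lintegral_congr hsplit]
    _ ≤ ((∫⁻ a, f a ∂μ) ^ (1 / 2 : ℝ) * (∫⁻ a, f a * g a ^ 2 ∂μ) ^ (1 / 2 : ℝ)) ^ 2 := by
        gcongr
        exact ENNReal.lintegral_mul_norm_pow_le hf (hf.mul (hg.pow_const 2))
          (by norm_num) (by norm_num) (by norm_num)
    _ = (∫⁻ a, f a ∂μ) * ∫⁻ a, f a * g a ^ 2 ∂μ := by rw [mul_pow, hsq_half, hsq_half]

/-- Young's inequality `‖k ⋆ g‖₂ ≤ ‖k‖₁ ‖g‖₂`, squared. -/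
theorem lintegral_sq_lintegral_sub_mul_le {G : Type*} [MeasurableSpace G] [AddCommGroup G]
    [MeasurableAdd₂ G] [MeasurableNeg G] {μ : Measure G} [SFinite μ] [μ.IsAddLeftInvariant]
    [μ.IsNegInvariant] {k g : G → ℝ≥0∞} (hk : Measurable k) (hg : Measurable g) :
    ∫⁻ z, (∫⁻ w, k (z - w) * g w ∂μ) ^ 2 ∂μ ≤ (∫⁻ x, k x ∂μ) ^ 2 * ∫⁻ w, g w ^ 2 ∂μ := by
  have hprod : Measurable fun p : G × G => k (p.1 - p.2) * g p.2 ^ 2 :=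
    (hk.comp (measurable_fst.sub measurable_snd)).mul ((hg.comp measurable_snd).pow_const 2)
  calc ∫⁻ z, (∫⁻ w, k (z - w) * g w ∂μ) ^ 2 ∂μ
      ≤ ∫⁻ z, (∫⁻ x, k x ∂μ) * ∫⁻ w, k (z - w) * g w ^ 2 ∂μ ∂μ := by
        refine lintegral_mono fun z => ?_
        rw [← lintegral_sub_left_eq_self k z]
        exact lintegral_mul_sq_le (hk.comp (measurable_const.sub measurable_id)).aemeasurable
          hg.aemeasurable
    _ = (∫⁻ x, k x ∂μ) * ∫⁻ w, ∫⁻ z, k (z - w) * g w ^ 2 ∂μ ∂μ := by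
        rw [lintegral_const_mul _ hprod.lintegral_prod_right',
          lintegral_lintegral_swap hprod.aemeasurable]
    _ = (∫⁻ x, k x ∂μ) * ∫⁻ w, (∫⁻ x, k x ∂μ) * g w ^ 2 ∂μ := by
        congr 1
        refine lintegral_congr fun w => ?_
        rw [lintegral_mul_const (f := fun z => k (z - w)) _ (hk.comp (measurable_sub_const w)),
          lintegral_sub_right_eq_self]
    _ = (∫⁻ x, k x ∂μ) ^ 2 * ∫⁻ w, g w ^ 2 ∂μ := by
        rw [lintegral_const_mul _ (hg.pow_const 2), ← mul_assoc, sq]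

lemma IsRQuad.continuous {Φ : (Fin n → ℂ) → ℝ} (hΦ : IsRQuad Φ) : Continuous Φ := by
  obtain ⟨B, hB⟩ := hΦ
  rw [show Φ = fun z => B.toContinuousBilinearMap z z from funext hB]
  exact B.toContinuousBilinearMap.continuous₂.comp (continuous_id.prodMk continuous_id)

def sqrtWeight (Φ : (Fin n → ℂ) → ℝ) (s : ℝ) (z : Fin n → ℂ) : ℝ :=
  Real.exp (-Φ z) * jb z ^ s

lemma sqrtWeight_nonneg (Φ : (Fin n → ℂ) → ℝ) (s : ℝ) (z : Fin n → ℂ) :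
    0 ≤ sqrtWeight Φ s z :=
  mul_nonneg (Real.exp_nonneg _) (Real.rpow_nonneg (jb_pos z).le s)

lemma measurable_sqrtWeight {Φ : (Fin n → ℂ) → ℝ} (hΦ : Measurable Φ) (s : ℝ) :
    Measurable (sqrtWeight Φ s) :=
  (Real.measurable_exp.comp hΦ.neg).mul
    (continuous_jb.rpow_const fun x => Or.inl (jb_pos x).ne').measurable

lemma hnorm_eq_lintegral_sq (Φ : (Fin n → ℂ) → ℝ) (s : ℝ) (u : (Fin n → ℂ) → ℂ) :
    hnorm Φ s u = ∫⁻ z, (‖u z‖ₑ * ENNReal.ofReal (sqrtWeight Φ s z)) ^ 2 := by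
  refine lintegral_congr fun z => ?_
  have hsq : sqrtWeight Φ s z ^ 2 = jb z ^ (2 * s) * Real.exp (-2 * Φ z) := by
    have hexp : Real.exp (-Φ z) ^ 2 = Real.exp (-2 * Φ z) := by
      rw [← Real.exp_nat_mul]
      ring_nf
    have hjb : (jb z ^ s) ^ 2 = jb z ^ (2 * s) := by
      rw [← Real.rpow_natCast, ← Real.rpow_mul (jb_pos z).le]
      ring_nf
    rw [sqrtWeight, mul_pow, hexp, hjb, mul_comm]
  rw [mul_pow, ← ENNReal.ofReal_pow (sqrtWeight_nonneg Φ s z), hsq, enorm_eq_nnnorm]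

lemma exp_mul_sqrtWeight_le {Φ : (Fin n → ℂ) → ℝ} {c r : ℝ} (s : ℝ) {z w : Fin n → ℂ}
    (h : 2 * r - Φ z - Φ w ≤ -c * eSq (z - w)) :
    Real.exp (2 * r - 2 * Φ w) * sqrtWeight Φ s z ≤
      schurKernel c s (z - w) * sqrtWeight Φ s w := by
  have hexp : Real.exp (2 * r - 2 * Φ w) * Real.exp (-Φ z)
      = Real.exp (2 * r - Φ z - Φ w) * Real.exp (-Φ w) := by
    rw [← Real.exp_add, ← Real.exp_add]
    ring_nf
  calc Real.exp (2 * r - 2 * Φ w) * sqrtWeight Φ s z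
      = Real.exp (2 * r - Φ z - Φ w) * jb z ^ s * Real.exp (-Φ w) := by
        rw [sqrtWeight, ← mul_assoc, hexp]
        ring
    _ ≤ Real.exp (-c * eSq (z - w)) * (2 ^ (|s| / 2) * jb (z - w) ^ |s| * jb w ^ s)
          * Real.exp (-Φ w) := by
        gcongr
        · exact Real.rpow_nonneg (jb_pos z).le s
        · exact jb_rpow_le s z w
    _ = schurKernel c s (z - w) * sqrtWeight Φ s w := by
        rw [schurKernel, sqrtWeight]
        ring

lemma enorm_berg_mul_le {a : ℂ} {Ψ : (Fin n → ℂ) → (Fin n → ℂ) → ℂ} {Φ : (Fin n → ℂ) → ℝ}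
    {c : ℝ} (hfund : ∀ z w, 2 * (Ψ z (star w)).re - Φ z - Φ w ≤ -c * eSq (z - w)) (s : ℝ)
    (u : (Fin n → ℂ) → ℂ) (z : Fin n → ℂ) :
    ‖berg a Ψ Φ u z‖ₑ * ENNReal.ofReal (sqrtWeight Φ s z) ≤
      ‖a‖ₑ * ∫⁻ w, ENNReal.ofReal (schurKernel c s (z - w)) *
        (‖u w‖ₑ * ENNReal.ofReal (sqrtWeight Φ s w)) := by
  set f : (Fin n → ℂ) → ℂ :=
    fun w => Complex.exp (2 * Ψ z (star w)) * u w * (Real.exp (-2 * Φ w) : ℂ)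
  have hf : ∀ w, ‖f w‖ * sqrtWeight Φ s z ≤
      schurKernel c s (z - w) * (‖u w‖ * sqrtWeight Φ s w) := by
    intro w
    have hnorm : ‖f w‖ = Real.exp (2 * (Ψ z (star w)).re - 2 * Φ w) * ‖u w‖ := by
      simp only [f, norm_mul, Complex.norm_exp, Complex.norm_real,
        Real.norm_of_nonneg (Real.exp_nonneg _)]
      rw [sub_eq_add_neg, Real.exp_add]
      simp only [Complex.mul_re, Complex.re_ofNat, Complex.im_ofNat, zero_mul, sub_zero, neg_mul]
      ring
    rw [hnorm]
    nlinarith [exp_mul_sqrtWeight_le s (hfund z w), norm_nonneg (u w)]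
  calc ‖berg a Ψ Φ u z‖ₑ * ENNReal.ofReal (sqrtWeight Φ s z)
      ≤ ‖a‖ₑ * (∫⁻ w, ‖f w‖ₑ) * ENNReal.ofReal (sqrtWeight Φ s z) := by
        rw [berg, enorm_mul]
        gcongr
        exact enorm_integral_le_lintegral_enorm f
    _ = ‖a‖ₑ * ∫⁻ w, ENNReal.ofReal (‖f w‖ * sqrtWeight Φ s z) := by
        rw [mul_assoc, ← lintegral_mul_const' _ _ ENNReal.ofReal_ne_top]
        simp_rw [ENNReal.ofReal_mul (norm_nonneg _), ofReal_norm]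
    _ ≤ ‖a‖ₑ * ∫⁻ w, ENNReal.ofReal (schurKernel c s (z - w) * (‖u w‖ * sqrtWeight Φ s w)) := by
        gcongr ‖a‖ₑ * ?_
        exact lintegral_mono fun w => ENNReal.ofReal_le_ofReal (hf w)
    _ = ‖a‖ₑ * ∫⁻ w, ENNReal.ofReal (schurKernel c s (z - w)) *
          (‖u w‖ₑ * ENNReal.ofReal (sqrtWeight Φ s w)) := by
        simp_rw [ENNReal.ofReal_mul (schurKernel_nonneg _ _ _), ENNReal.ofReal_mul (norm_nonneg _),
          ofReal_norm]

theorem stmt_4_general (n : ℕ) (Φ : (Fin n → ℂ) → ℝ) (hΦ : IsSPSH Φ)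
    (Ψ : (Fin n → ℂ) → (Fin n → ℂ) → ℂ)
    (C₀ c₀ : ℝ) (hc₀ : 0 < c₀)
    (hfund : ∀ z w : Fin n → ℂ,
        -C₀ * eSq (z - w) ≤ 2 * (Ψ z (star w)).re - Φ z - Φ w ∧
        2 * (Ψ z (star w)).re - Φ z - Φ w ≤ -c₀ * eSq (z - w))
    (s : ℝ) (Chat : ℂ) :
    ∃ M : ℝ, 0 < M ∧ ∀ u : (Fin n → ℂ) → ℂ, Measurable u → hnorm Φ s u < ⊤ →
      hnorm Φ s (berg Chat Ψ Φ u) ≤ ENNReal.ofReal (M ^ 2) * hnorm Φ s u := by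
  set K := ∫ x : Fin n → ℂ, schurKernel c₀ s x
  have hK_nonneg : 0 ≤ K := integral_nonneg (schurKernel_nonneg c₀ s)
  have hK : ∫⁻ x, ENNReal.ofReal (schurKernel c₀ s x) = ENNReal.ofReal K :=
    (ofReal_integral_eq_lintegral_ofReal (integrable_schurKernel hc₀ s)
      (ae_of_all _ (schurKernel_nonneg c₀ s))).symm
  refine ⟨‖Chat‖ * K + 1, by positivity, fun u hu _ => ?_⟩
  have hg : Measurable fun w => ‖u w‖ₑ * ENNReal.ofReal (sqrtWeight Φ s w) :=
    hu.enorm.mul (measurable_sqrtWeight hΦ.1.continuous.measurable s).ennreal_ofReal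
  calc hnorm Φ s (berg Chat Ψ Φ u)
      ≤ ∫⁻ z, (‖Chat‖ₑ * ∫⁻ w, ENNReal.ofReal (schurKernel c₀ s (z - w)) *
          (‖u w‖ₑ * ENNReal.ofReal (sqrtWeight Φ s w))) ^ 2 := by
        rw [hnorm_eq_lintegral_sq]
        exact lintegral_mono fun z =>
          pow_le_pow_left' (enorm_berg_mul_le (fun z w => (hfund z w).2) s u z) 2
    _ ≤ ‖Chat‖ₑ ^ 2 * (ENNReal.ofReal K ^ 2 * hnorm Φ s u) := by
        simp_rw [mul_pow]
        rw [lintegral_const_mul' _ _ (by simp), hnorm_eq_lintegral_sq, ← hK]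
        gcongr
        exact lintegral_sq_lintegral_sub_mul_le
          (continuous_schurKernel c₀ s).measurable.ennreal_ofReal hg
    _ = ENNReal.ofReal ((‖Chat‖ * K) ^ 2) * hnorm Φ s u := by
        rw [← ofReal_norm, ← ENNReal.ofReal_pow (norm_nonneg _), ← ENNReal.ofReal_pow hK_nonneg,
          ← mul_assoc, ← ENNReal.ofReal_mul (by positivity), mul_pow]
    _ ≤ ENNReal.ofReal ((‖Chat‖ * K + 1) ^ 2) * hnorm Φ s u := by
        gcongr
        linarith

/-- Let `Φ` be a strictly plurisubharmonic quadratic form on `ℂⁿ`, `Ψ` its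
polarization satisfying the fundamental estimate
`−C₀|z−w|² ≤ 2 Re Ψ(z,w̄) − Φ(z) − Φ(w) ≤ −c₀|z−w|²`.  Then for every `s ∈ ℝ` and `Ĉ ∈ ℂ`
the Bergman-type operator `Π u (z) = Ĉ ∫ e^{2Ψ(z,w̄)} u(w) e^{-2Φ(w)} dL(w)` is bounded on
`L²_{Φ,s}(ℂⁿ)`. -/
theorem stmt_4 (n : ℕ) (hn : 1 ≤ n) (Φ : (Fin n → ℂ) → ℝ) (hΦ : IsSPSH Φ)
    (Ψ : (Fin n → ℂ) → (Fin n → ℂ) → ℂ) (hΨ : IsCQuad2 Ψ)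
    (hpol : ∀ z : Fin n → ℂ, Ψ z (star z) = (Φ z : ℂ))
    (C₀ c₀ : ℝ) (hC₀ : 0 < C₀) (hc₀ : 0 < c₀)
    (hfund : ∀ z w : Fin n → ℂ,
        -C₀ * eSq (z - w) ≤ 2 * (Ψ z (star w)).re - Φ z - Φ w ∧
        2 * (Ψ z (star w)).re - Φ z - Φ w ≤ -c₀ * eSq (z - w))
    (s : ℝ) (Chat : ℂ) :
    ∃ M : ℝ, 0 < M ∧ ∀ u : (Fin n → ℂ) → ℂ, Measurable u → hnorm Φ s u < ⊤ →
      hnorm Φ s (berg Chat Ψ Φ u) ≤ ENNReal.ofReal (M ^ 2) * hnorm Φ s u :=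
  stmt_4_general n Φ hΦ Ψ C₀ c₀ hc₀ hfund s Chat
end
end

section
/- Let Q ∈ M_{2n×2n}(ℂ) be symmetric with positive semidefinite real part, let J = [[0, I],[−I, 0]] be the standard 2n×2n symplectic matrix, let F = JQ, and let S = (⋂_{j=0}^{2n−1} ker[(Re F)(Im F)^j]) ∩ ℝ^{2n} be the singular space. Then for every t > 0, S = ⋂_{0 ≤ s ≤ t} ker(Im(e^{2isF})) ∩ ℝ^{2n} = ⋂_{s ∈ ℝ} ker(Im(e^{2isF})) ∩ ℝ^{2n}; that is, a vector X ∈ ℝ^{2n} belongs to S if and only if Im(e^{2isF} X) = 0 for all s in [0, t] (equivalently, for all s ∈ ℝ). -/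
/-!
With `M = 2iF` we have `e^{2isF} = e^{sM}`, `Re M = -2 Im F` and `Im M = 2 Re F`; the
singular space is then cut out by the conditions `(Im M)(Re M)^j X = 0`, and by Cayley–Hamilton the
conditions with `j < 2n` imply all the others. For a real vector `w` we have
`Re (M w) = (Re M) w` and `Im (M w) = (Im M) w`, so by induction `M^k X = (Re M)^k X` is real
as long as `(Im M)(Re M)^j X = 0` for `j < k`, and then `Im (M^(k+1) X) = (Im M)(Re M)^k X`.
Hence `X ∈ S` iff every `M^k X` is real. If so, the exponential series `e^{sM} X` is real for
all real `s`. Conversely, if `Im (e^{sM} X)` vanishes on `[0, t]`, so do all its derivatives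
`Im (e^{sM} M^k X)`, and evaluating them at `s = 0` shows that every `M^k X` is real.
-/

open Matrix Set
open scoped Nat

-- Any algebra norm would do; it only gives access to the analytic API of `NormedSpace.exp`.
attribute [local instance] Matrix.linftyOpNormedRing Matrix.linftyOpNormedAlgebra

theorem Set.EqOn.hasDerivAt_eqOn_zero_Icc {E : Type*} [NormedAddCommGroup E] [NormedSpace ℝ E]
    {f f' : ℝ → E} {a b : ℝ} (h : EqOn f 0 (Icc a b)) (hab : a < b)
    (hf : ∀ s ∈ Ioo a b, HasDerivAt f (f' s) s) (hf' : ContinuousOn f' (Icc a b)) :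
    EqOn f' 0 (Icc a b) := by
  have hIoo : EqOn f' 0 (Ioo a b) := fun s hs =>
    (hf s hs).unique ((hasDerivAt_const s (0 : E)).congr_of_eventuallyEq
      (Filter.mem_of_superset (Ioo_mem_nhds hs.1 hs.2) fun x hx => h (Ioo_subset_Icc_self hx)))
  exact hIoo.of_subset_closure hf' continuousOn_const Ioo_subset_Icc_self (closure_Ioo hab.ne).ge

namespace Matrix

variable {l m : Type*}

theorem re_mulVec_ofReal [Fintype l] (M : Matrix m l ℂ) (w : l → ℝ) (i : m) :
    ((M *ᵥ fun j => (w j : ℂ)) i).re = (M.map Complex.re *ᵥ w) i := by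
  simp [mulVec, dotProduct, Complex.re_sum]

theorem im_mulVec_ofReal [Fintype l] (M : Matrix m l ℂ) (w : l → ℝ) (i : m) :
    ((M *ᵥ fun j => (w j : ℂ)) i).im = (M.map Complex.im *ᵥ w) i := by
  simp [mulVec, dotProduct, Complex.im_sum]

variable [Fintype m] [DecidableEq m]

open Polynomial in
theorem pow_mem_span_pow_lt_card {R : Type*} [CommRing R] [Nontrivial R] (B : Matrix m m R)
    (k : ℕ) :
    B ^ k ∈ Submodule.span R ((B ^ ·) '' Iio (Fintype.card m)) := by
  rw [pow_eq_aeval_mod_charpoly, aeval_eq_sum_range]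
  refine Submodule.sum_mem _ fun i _ => ?_
  by_cases hi : (X ^ k %ₘ B.charpoly).coeff i = 0
  · simp [hi]
  refine Submodule.smul_mem _ _ (Submodule.subset_span ⟨i, ?_, rfl⟩)
  have := (le_degree_of_mem_supp i (mem_support_iff.2 hi)).trans_lt
    (degree_modByMonic_lt _ B.charpoly_monic)
  rw [charpoly_degree_eq_dim] at this
  exact_mod_cast this

theorem mulVec_pow_mulVec_eq_zero_of_forall_lt_card {R : Type*} [CommRing R] [Nontrivial R]
    (A B : Matrix m m R) (X : m → R) (h : ∀ j < Fintype.card m, A *ᵥ (B ^ j *ᵥ X) = 0) (k : ℕ) :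
    A *ᵥ (B ^ k *ᵥ X) = 0 := by
  have hspan : Submodule.span R ((B ^ ·) '' Iio (Fintype.card m)) ≤
      LinearMap.ker (A.mulVecLin ∘ₗ (mulVecBilin R R).flip X) :=
    Submodule.span_le.2 (by rintro _ ⟨j, hj, rfl⟩; exact h j hj)
  exact hspan (B.pow_mem_span_pow_lt_card k)

theorem pow_mulVec_ofReal_of_forall_lt (M : Matrix m m ℂ) (X : m → ℝ) {k : ℕ}
    (h : ∀ j < k, M.map Complex.im *ᵥ (M.map Complex.re ^ j *ᵥ X) = 0) :
    (M ^ k *ᵥ fun i => (X i : ℂ)) = fun i => ((M.map Complex.re ^ k *ᵥ X) i : ℂ) := by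
  induction k with
  | zero => simp
  | succ k ih =>
    rw [pow_succ', ← mulVec_mulVec, ih fun j hj => h j (by omega), pow_succ', ← mulVec_mulVec]
    funext i
    apply Complex.ext
    · exact re_mulVec_ofReal M _ i
    · rw [im_mulVec_ofReal, h k k.lt_succ_self]
      simp

theorem im_pow_succ_mulVec_ofReal (M : Matrix m m ℂ) (X : m → ℝ) {k : ℕ}
    (h : ∀ j < k, M.map Complex.im *ᵥ (M.map Complex.re ^ j *ᵥ X) = 0) (i : m) :
    ((M ^ (k + 1) *ᵥ fun i => (X i : ℂ)) i).im =
      (M.map Complex.im *ᵥ (M.map Complex.re ^ k *ᵥ X)) i := by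
  rw [pow_succ', ← mulVec_mulVec, pow_mulVec_ofReal_of_forall_lt M X h, im_mulVec_ofReal]

theorem forall_im_pow_mulVec_ofReal_eq_zero_iff (M : Matrix m m ℂ) (X : m → ℝ) :
    (∀ k i, ((M ^ k *ᵥ fun i => (X i : ℂ)) i).im = 0) ↔
      ∀ j, M.map Complex.im *ᵥ (M.map Complex.re ^ j *ᵥ X) = 0 := by
  refine ⟨fun h j => ?_, fun h k i => ?_⟩
  · induction j using Nat.strong_induction_on with
    | _ j ih =>
      ext i
      rw [← im_pow_succ_mulVec_ofReal M X ih, h]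
      rfl
  · rw [pow_mulVec_ofReal_of_forall_lt M X fun j _ => h j, Complex.ofReal_im]

theorem hasSum_exp_smul_mulVec (M : Matrix m m ℂ) (v : m → ℂ) (z : ℂ) :
    HasSum (fun k : ℕ => ((k ! : ℂ)⁻¹ * z ^ k) • (M ^ k *ᵥ v))
      (NormedSpace.exp (z • M) *ᵥ v) := by
  convert (NormedSpace.exp_series_hasSum_exp' (𝕂 := ℂ) (z • M)).map
    (mulVec.addMonoidHomLeft v) (continuous_id.matrix_mulVec continuous_const) using 2 with k
  · simp only [mulVec.addMonoidHomLeft, AddMonoidHom.coe_mk, ZeroHom.coe_mk, smul_pow, smul_smul]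
    exact (smul_mulVec _ _ _).symm
  · rfl

theorem hasDerivAt_exp_smul_mulVec (M : Matrix m m ℂ) (w : m → ℂ) (s : ℝ) :
    HasDerivAt (fun s : ℝ => NormedSpace.exp ((s : ℂ) • M) *ᵥ w)
      (NormedSpace.exp ((s : ℂ) • M) *ᵥ (M *ᵥ w)) s := by
  simp only [Complex.coe_smul, mulVec_mulVec]
  exact (((mulVecBilin ℂ ℂ).flip w).toContinuousLinearMap.restrictScalars ℝ).hasFDerivAt
    |>.comp_hasDerivAt s (hasDerivAt_exp_smul_const M s)

theorem hasDerivAt_im_exp_smul_mulVec (M : Matrix m m ℂ) (w : m → ℂ) (i : m) (s : ℝ) :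
    HasDerivAt (fun s : ℝ => ((NormedSpace.exp ((s : ℂ) • M) *ᵥ w) i).im)
      ((NormedSpace.exp ((s : ℂ) • M) *ᵥ (M *ᵥ w)) i).im s :=
  (Complex.imCLM.comp (ContinuousLinearMap.proj i : (m → ℂ) →L[ℝ] ℂ)).hasFDerivAt
    |>.comp_hasDerivAt s (hasDerivAt_exp_smul_mulVec M w s)

theorem im_exp_smul_mulVec_eq_zero (M : Matrix m m ℂ) (v : m → ℂ)
    (h : ∀ k i, ((M ^ k *ᵥ v) i).im = 0) (s : ℝ) (i : m) :
    ((NormedSpace.exp ((s : ℂ) • M) *ᵥ v) i).im = 0 := by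
  refine (Complex.hasSum_im (Pi.hasSum.1 (hasSum_exp_smul_mulVec M v s) i)).unique ?_
  convert hasSum_zero with k
  have hcoeff : (k ! : ℂ)⁻¹ * (s : ℂ) ^ k = (((k ! : ℝ)⁻¹ * s ^ k : ℝ) : ℂ) := by
    push_cast; rfl
  rw [Pi.smul_apply, smul_eq_mul, hcoeff, Complex.im_ofReal_mul, h, mul_zero]

theorem im_pow_mulVec_eq_zero_of_forall_Icc (M : Matrix m m ℂ) (v : m → ℂ) {t : ℝ} (ht : 0 < t)
    (i : m) (h : ∀ s ∈ Icc 0 t, ((NormedSpace.exp ((s : ℂ) • M) *ᵥ v) i).im = 0) (k : ℕ) :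
    ((M ^ k *ᵥ v) i).im = 0 := by
  have hk : ∀ k : ℕ, EqOn (fun s : ℝ => ((NormedSpace.exp ((s : ℂ) • M) *ᵥ (M ^ k *ᵥ v)) i).im)
      0 (Icc 0 t) := by
    intro k
    induction k with
    | zero => exact fun s hs => by simpa using h s hs
    | succ k ih =>
      simp only [pow_succ', ← mulVec_mulVec]
      exact ih.hasDerivAt_eqOn_zero_Icc ht (fun s _ => hasDerivAt_im_exp_smul_mulVec M _ i s)
        fun s _ => (hasDerivAt_im_exp_smul_mulVec M _ i s).continuousAt.continuousWithinAt
  simpa using hk k (left_mem_Icc.2 ht.le)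

theorem forall_map_im_two_mul_I_smul_iff (F : Matrix m m ℂ) (X : m → ℝ) :
    (∀ j, ((2 * Complex.I) • F).map Complex.im *ᵥ
        (((2 * Complex.I) • F).map Complex.re ^ j *ᵥ X) = 0) ↔
      ∀ j, F.map Complex.re *ᵥ (F.map Complex.im ^ j *ᵥ X) = 0 := by
  have him : ((2 * Complex.I) • F).map Complex.im = (2 : ℝ) • F.map Complex.re := by
    ext; simp
  have hre : ((2 * Complex.I) • F).map Complex.re = (-2 : ℝ) • F.map Complex.im := by
    ext; simp
  have hscalar : ∀ j : ℕ, (-2 : ℝ) ^ j * 2 ≠ 0 := fun j =>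
    mul_ne_zero (pow_ne_zero j (by norm_num)) two_ne_zero
  simp only [him, hre, smul_pow, smul_mulVec, mulVec_smul, smul_smul, smul_eq_zero, hscalar,
    false_or]

end Matrix

theorem stmt_17_general (n : ℕ)
    (F : Matrix (Fin n ⊕ Fin n) (Fin n ⊕ Fin n) ℂ)
    (S : Set (Fin n ⊕ Fin n → ℝ))
    (hS : S = {X : Fin n ⊕ Fin n → ℝ | ∀ j : ℕ, j ≤ 2 * n - 1 →
        (F.map Complex.re).mulVec (((F.map Complex.im) ^ j).mulVec X) = 0})
    (t : ℝ) (ht : 0 < t) (X : Fin n ⊕ Fin n → ℝ) :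
    (X ∈ S ↔ ∀ s ∈ Set.Icc (0 : ℝ) t, ∀ i : Fin n ⊕ Fin n,
        ((NormedSpace.exp (((2 : ℂ) * Complex.I * (s : ℂ)) • F)).mulVec
            (fun i => (X i : ℂ)) i).im = 0) ∧
    (X ∈ S ↔ ∀ s : ℝ, ∀ i : Fin n ⊕ Fin n,
        ((NormedSpace.exp (((2 : ℂ) * Complex.I * (s : ℂ)) • F)).mulVec
            (fun i => (X i : ℂ)) i).im = 0) := by
  set M := (2 * Complex.I) • F
  have hexp (s : ℝ) : ((2 : ℂ) * Complex.I * (s : ℂ)) • F = (s : ℂ) • M := by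
    rw [smul_smul, mul_comm (s : ℂ)]
  have hS_real : X ∈ S ↔ ∀ k i, ((M ^ k *ᵥ fun i => (X i : ℂ)) i).im = 0 := by
    rw [forall_im_pow_mulVec_ofReal_eq_zero_iff, forall_map_im_two_mul_I_smul_iff, hS]
    refine ⟨fun h => mulVec_pow_mulVec_eq_zero_of_forall_lt_card _ _ X fun j hj => h j ?_,
      fun h j _ => h j⟩
    simp only [Fintype.card_sum, Fintype.card_fin] at hj
    omega
  have hforward (hX : X ∈ S) (s : ℝ) (i) :
      ((NormedSpace.exp (((2 : ℂ) * Complex.I * (s : ℂ)) • F)).mulVec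
        (fun i => (X i : ℂ)) i).im = 0 := by
    rw [hexp]
    exact im_exp_smul_mulVec_eq_zero M _ (hS_real.1 hX) s i
  have hbackward (h : ∀ s ∈ Set.Icc (0 : ℝ) t, ∀ i,
      ((NormedSpace.exp (((2 : ℂ) * Complex.I * (s : ℂ)) • F)).mulVec
        (fun i => (X i : ℂ)) i).im = 0) : X ∈ S :=
    hS_real.2 fun k i => im_pow_mulVec_eq_zero_of_forall_Icc M _ ht i
      (fun s hs => hexp s ▸ h s hs i) k
  exact ⟨⟨fun hX s _ => hforward hX s, hbackward⟩,
    ⟨hforward, fun h => hbackward fun s _ => h s⟩⟩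

/-- Let `Q` be a symmetric complex `2n×2n` matrix with positive
semidefinite real part, `J` the standard symplectic matrix, `F = JQ`, and
`S = (⋂_{j=0}^{2n−1} ker[(Re F)(Im F)^j]) ∩ ℝ^{2n}` the singular space.  Then for every
`t > 0` and `X ∈ ℝ^{2n}`:  `X ∈ S` iff `Im(e^{2isF} X) = 0` for all `s ∈ [0,t]`, and
`X ∈ S` iff `Im(e^{2isF} X) = 0` for all `s ∈ ℝ`. -/
theorem stmt_17 (n : ℕ) (hn : 1 ≤ n)
    (Q : Matrix (Fin n ⊕ Fin n) (Fin n ⊕ Fin n) ℂ) (hQ : Qᵀ = Q)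
    (hReQ : ∀ X : Fin n ⊕ Fin n → ℝ, 0 ≤ (Q.map Complex.re).mulVec X ⬝ᵥ X)
    (J : Matrix (Fin n ⊕ Fin n) (Fin n ⊕ Fin n) ℂ)
    (hJ : J = Matrix.fromBlocks 0 1 (-1) 0)
    (F : Matrix (Fin n ⊕ Fin n) (Fin n ⊕ Fin n) ℂ) (hF : F = J * Q)
    (S : Set (Fin n ⊕ Fin n → ℝ))
    (hS : S = {X : Fin n ⊕ Fin n → ℝ | ∀ j : ℕ, j ≤ 2 * n - 1 →
        (F.map Complex.re).mulVec (((F.map Complex.im) ^ j).mulVec X) = 0})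
    (t : ℝ) (ht : 0 < t) (X : Fin n ⊕ Fin n → ℝ) :
    (X ∈ S ↔ ∀ s ∈ Set.Icc (0 : ℝ) t, ∀ i : Fin n ⊕ Fin n,
        ((NormedSpace.exp (((2 : ℂ) * Complex.I * (s : ℂ)) • F)).mulVec
            (fun i => (X i : ℂ)) i).im = 0) ∧
    (X ∈ S ↔ ∀ s : ℝ, ∀ i : Fin n ⊕ Fin n,
        ((NormedSpace.exp (((2 : ℂ) * Complex.I * (s : ℂ)) • F)).mulVec
            (fun i => (X i : ℂ)) i).im = 0) :=
  stmt_17_general n F S hS t ht X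
end
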